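/- Let K ⊆ L be a field extension with [L : K] ≥ 4. Then the ring K + XL[X] is not condensed. -/

import Mathlib

/-- An integral domain is condensed if for every pair of nonzero ideals `I, J`,
the product `I*J` equals the set of products `{i*j : i ∈ I, j ∈ J}`. -/
def IsCondensed (D : Type*) [CommRing D] : Prop :=
  ∀ I J : Ideal D, I ≠ ⊥ → J ≠ ⊥ → ∀ x ∈ I * J, ∃ i ∈ I, ∃ j ∈ J, x = i * j

/-- The ring `A + X·B[X]`: polynomials over `B` whose constant coefficient lies
in the subring `A`. -/
def constSubring {B : Type*} [CommRing B] (A : Subring B) : Subring (Polynomial B) where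
  carrier := {f | f.coeff 0 ∈ A}
  zero_mem' := by simpa using zero_mem A
  one_mem' := by simpa using one_mem A
  add_mem' := by
    intro f g hf hg
    simpa using add_mem hf hg
  neg_mem' := by
    intro f hf
    simpa using A.neg_mem hf
  mul_mem' := by
    intro f g hf hg
    simpa [Polynomial.mul_coeff_zero] using mul_mem hf hg

/-! In `R = K + X L[X]` let `I = (X, αX)` and `J = (X, βX)`. If `X² + αβX² ∈ IJ` were a product
`fg` with `f ∈ I`, `g ∈ J`, then `f = X p`, `g = X q` with `p(0) ∈ K + Kα`, `q(0) ∈ K + Kβ`, and the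
coefficient of `X²` gives `1 + αβ = (a + bα)(c + dβ)`. When `1, α, β, αβ` are `K`-linearly
independent this forces `ac = 1`, `ad = 0`, `bd = 1`, which is absurd. Such `α, β` exist once
`[L : K] ≥ 4`: take `α ∉ K` and `β ∉ K(α)` (tower law), or `β = α²` if `K(α) = L`. -/

open Polynomial IntermediateField

theorem linearIndependent_one_of_notMem_range {F E : Type*} [Field F] [Ring E] [Nontrivial E]
    [Algebra F E] {x : E} (hx : x ∉ Set.range (algebraMap F E)) :
    LinearIndependent F ![1, x] :=
  (LinearIndependent.pair_iff' one_ne_zero).mpr fun a ha =>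
    hx ⟨a, by rw [← ha, Algebra.algebraMap_eq_smul_one]⟩

section Field
variable {K L : Type*} [Field K] [Field L] [Algebra K L]

theorem linearIndependent_one_mul_of_mem_of_notMem {F : IntermediateField K L} {α β : L}
    (hαF : α ∈ F) (hα : α ∉ (⊥ : IntermediateField K L)) (hβ : β ∉ F) :
    LinearIndependent K ![1, α, β, α * β] := by
  have hαK : LinearIndependent K ![1, (⟨α, hαF⟩ : F)] :=
    linearIndependent_one_of_notMem_range fun ⟨a, ha⟩ =>
      hα (mem_bot.mpr ⟨a, congrArg Subtype.val ha⟩)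
  have hβF : LinearIndependent F ![1, β] :=
    linearIndependent_one_of_notMem_range fun ⟨a, ha⟩ => hβ (ha ▸ a.2)
  have key := (linearIndependent_smul hαK hβF).comp ![(0, 0), (1, 0), (0, 1), (1, 1)] (by decide)
  convert key using 1
  ext i; fin_cases i <;> simp [Algebra.smul_def]

theorem linearIndependent_pow_of_le_rank_adjoin (α : L) (n : ℕ) (h : n ≤ Module.rank K K⟮α⟯) :
    LinearIndependent K fun i : Fin n => α ^ (i : ℕ) := by
  by_cases hα : IsIntegral K α
  · have : FiniteDimensional K K⟮α⟯ := adjoin.finiteDimensional hα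
    rw [← Module.finrank_eq_rank, adjoin.finrank hα, Nat.cast_le] at h
    exact (linearIndependent_pow α).comp (Fin.castLE h) (Fin.castLE_injective h)
  · have hinj : Function.Injective (aeval (R := K) α) :=
      transcendental_iff_injective.mp fun halg => hα halg.isIntegral
    simpa [coe_basisMonomials, Function.comp_def] using
      ((basisMonomials K).linearIndependent.map' (aeval α).toLinearMap
        (LinearMap.ker_eq_bot.mpr hinj)).comp Fin.val Fin.val_injective

theorem exists_linearIndependent_one_mul (h : 4 ≤ Module.rank K L) :
    ∃ α β : L, LinearIndependent K ![1, α, β, α * β] := by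
  have hbot : (⊥ : IntermediateField K L) ≠ ⊤ := fun hbot => by
    have hrank := IntermediateField.rank_bot (F := K) (E := L)
    rw [hbot, rank_top'] at hrank
    rw [hrank] at h
    norm_num at h
  obtain ⟨α, -, hα⟩ := SetLike.exists_of_lt hbot.lt_top
  by_cases htop : K⟮α⟯ = ⊤
  · refine ⟨α, α ^ 2, ?_⟩
    convert linearIndependent_pow_of_le_rank_adjoin α 4 (by rwa [htop, rank_top']) using 1
    ext i
    fin_cases i <;> simp [pow_succ, mul_assoc]
  · obtain ⟨β, -, hβ⟩ := SetLike.exists_of_lt (Ne.lt_top htop)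
    exact ⟨α, β, linearIndependent_one_mul_of_mem_of_notMem (mem_adjoin_simple_self K α) hα hβ⟩

end Field

theorem LinearIndependent.mul_ne_one_add_mul {R A : Type*} [CommRing R] [Nontrivial R]
    [CommRing A] [Algebra R A] {α β : A} (hind : LinearIndependent R ![1, α, β, α * β])
    (a b c d : R) :
    (algebraMap R A a + algebraMap R A b * α) * (algebraMap R A c + algebraMap R A d * β) ≠
      1 + α * β := by
  intro he
  have hcoeff := Fintype.linearIndependent_iff.mp hind ![a * c - 1, b * c, a * d, b * d - 1] (by
    simp only [Fin.sum_univ_four, Algebra.smul_def, Matrix.cons_val_zero, Matrix.cons_val_one,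
      Matrix.cons_val_two, Matrix.cons_val_three, Matrix.head_cons, Matrix.tail_cons,
      map_sub, map_mul, map_one]
    linear_combination he)
  have hac : a * c = 1 := sub_eq_zero.mp (hcoeff 0)
  have had : a * d = 0 := hcoeff 2
  have hbd : b * d = 1 := sub_eq_zero.mp (hcoeff 3)
  have hd : d = 0 := by linear_combination c * had - d * hac
  simp [hd] at hbd

namespace constSubring

variable {B : Type*} [CommRing B] (A : Subring B)

theorem mem_iff {f : B[X]} : f ∈ constSubring A ↔ f.coeff 0 ∈ A := Iff.rfl

noncomputable def monomialOne (γ : B) : constSubring A :=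
  ⟨monomial 1 γ, (mem_iff A).mpr (by simp)⟩

theorem exists_eq_X_mul_of_mem_span {γ : B} {f : constSubring A}
    (hf : f ∈ Ideal.span {monomialOne A 1, monomialOne A γ}) :
    ∃ p : B[X], (f : B[X]) = X * p ∧ ∃ a ∈ A, ∃ b ∈ A, p.coeff 0 = a + b * γ := by
  obtain ⟨u, v, rfl⟩ := Ideal.mem_span_pair.mp hf
  refine ⟨u + v * C γ, ?_, _, (mem_iff A).mp u.2, _, (mem_iff A).mp v.2, by simp⟩
  simp only [monomialOne, Subring.coe_add, Subring.coe_mul, ← C_mul_X_eq_monomial, map_one]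
  ring

theorem not_isCondensed [Nontrivial B] {α β : B}
    (h : ∀ a ∈ A, ∀ b ∈ A, ∀ c ∈ A, ∀ d ∈ A, (a + b * α) * (c + d * β) ≠ 1 + α * β) :
    ¬ IsCondensed (constSubring A) := by
  intro hcond
  have hX : monomialOne A 1 ≠ 0 := fun h0 => by
    simpa [monomialOne] using congrArg (fun f : constSubring A => (f : B[X]).coeff 1) h0
  have hX_mem (γ : B) : monomialOne A 1 ∈ Ideal.span {monomialOne A 1, monomialOne A γ} :=
    Ideal.subset_span (Set.mem_insert _ _)
  have hγ_mem (γ : B) : monomialOne A γ ∈ Ideal.span {monomialOne A 1, monomialOne A γ} :=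
    Ideal.subset_span (Set.mem_insert_of_mem _ rfl)
  have hspan_ne_bot (γ : B) : Ideal.span {monomialOne A 1, monomialOne A γ} ≠ ⊥ :=
    (Submodule.ne_bot_iff _).mpr ⟨_, hX_mem γ, hX⟩
  obtain ⟨i, hi, j, hj, hij⟩ := hcond _ _ (hspan_ne_bot α) (hspan_ne_bot β)
    (monomialOne A 1 * monomialOne A 1 + monomialOne A α * monomialOne A β)
    (Ideal.add_mem _ (Ideal.mul_mem_mul (hX_mem α) (hX_mem β))
      (Ideal.mul_mem_mul (hγ_mem α) (hγ_mem β)))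
  obtain ⟨p, hp, a, ha, b, hb, hp0⟩ := exists_eq_X_mul_of_mem_span A hi
  obtain ⟨q, hq, c, hc, d, hd, hq0⟩ := exists_eq_X_mul_of_mem_span A hj
  have hpoly : C (1 + α * β) * X ^ 2 = X ^ 2 * (p * q) := by
    have hval := congrArg Subtype.val hij
    simp only [monomialOne, Subring.coe_add, Subring.coe_mul, hp, hq, ← C_mul_X_eq_monomial,
      map_one] at hval
    rw [map_add, map_mul, map_one]
    linear_combination hval
  have hcoeff := congrArg (coeff · 2) hpoly
  simp only [coeff_C_mul_X_pow, coeff_X_pow_mul'] at hcoeff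
  exact h a ha b hb c hc d hd (by simpa [mul_coeff_zero, hp0, hq0] using hcoeff.symm)

end constSubring

theorem stmt18 (K L : Type*) [Field K] [Field L] [Algebra K L]
    (h : 4 ≤ Module.rank K L) :
    ¬ IsCondensed (constSubring (algebraMap K L).range) := by
  obtain ⟨α, β, hind⟩ := exists_linearIndependent_one_mul h
  refine constSubring.not_isCondensed _ (α := α) (β := β) ?_
  rintro _ ⟨a, rfl⟩ _ ⟨b, rfl⟩ _ ⟨c, rfl⟩ _ ⟨d, rfl⟩
  exact hind.mul_ne_one_add_mul a b c d
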